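/- Let α > 0 and c₁, C₁ > 0. There exist constants c, C > 0 depending only on α, c₁, C₁ such that the following holds. Let 0 < δ ≤ 1 and let ξ₁, ξ₂, η₁, η₂ ∈ ℝ satisfy: 1/8 ≤ |ξ₁| ≤ 8, 1/8 ≤ |ξ₁+ξ₂| ≤ 8, δ/8 ≤ |ξ₂| ≤ 8δ, c₁ ≤ |η₁/ξ₁ - η₂/ξ₂| ≤ C₁, and the resonance condition c₁ |(η₁ξ₂ - η₂ξ₁)²/(ξ₁ξ₂(ξ₁+ξ₂))| ≤ |(α+1)(|ξ₁|^α ξ₁ + |ξ₂|^α ξ₂ - |ξ₁+ξ₂|^α(ξ₁+ξ₂))| ≤ C₁ |(η₁ξ₂ - η₂ξ₁)²/(ξ₁ξ₂(ξ₁+ξ₂))|. Then the determinant B = det [[ (α+1)|ξ₁|^α - η₁²/ξ₁², (α+1)|ξ₂|^α - η₂²/ξ₂², (α+1)|ξ₁+ξ₂|^α - (η₁+η₂)²/(ξ₁+ξ₂)² ], [ 2η₁/ξ₁, 2η₂/ξ₂, 2(η₁+η₂)/(ξ₁+ξ₂) ], [ 1, 1, 1 ]] satisfies c δ ≤ |B|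 ≤ C δ. -/

import Mathlib

/-- Dispersive part `(α+1)(|ξ₁|^α ξ₁ + |ξ₂|^α ξ₂ - |ξ₁+ξ₂|^α(ξ₁+ξ₂))`. -/
noncomputable def dispPart (α ξ₁ ξ₂ : ℝ) : ℝ :=
  (α + 1) * (|ξ₁| ^ α * ξ₁ + |ξ₂| ^ α * ξ₂ - |ξ₁ + ξ₂| ^ α * (ξ₁ + ξ₂))

/-- Transverse part `(η₁ξ₂ - η₂ξ₁)²/(ξ₁ξ₂(ξ₁+ξ₂))`. -/
noncomputable def transPart (ξ₁ ξ₂ η₁ η₂ : ℝ) : ℝ :=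
  (η₁ * ξ₂ - η₂ * ξ₁) ^ 2 / (ξ₁ * ξ₂ * (ξ₁ + ξ₂))

/-- Determinant of the matrix of (unnormalized) normals to the characteristic surface at
`(ξ₁,η₁)`, `(ξ₂,η₂)`, `(ξ₁+ξ₂,η₁+η₂)`. -/
noncomputable def detB (α ξ₁ ξ₂ η₁ η₂ : ℝ) : ℝ :=
  Matrix.det
    !![(α + 1) * |ξ₁| ^ α - η₁ ^ 2 / ξ₁ ^ 2,
         (α + 1) * |ξ₂| ^ α - η₂ ^ 2 / ξ₂ ^ 2,
         (α + 1) * |ξ₁ + ξ₂| ^ α - (η₁ + η₂) ^ 2 / (ξ₁ + ξ₂) ^ 2;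
       2 * η₁ / ξ₁, 2 * η₂ / ξ₂, 2 * (η₁ + η₂) / (ξ₁ + ξ₂);
       1, 1, 1]

/-!
Write `w = η₁/ξ₁ - η₂/ξ₂`, `d = dispPart`, `t = transPart`. Expanding the determinant gives
`B (ξ₁ + ξ₂) = -2 w (d - t)`, and `t (ξ₁ + ξ₂) = ξ₁ ξ₂ w²`. Since `x ↦ |x|^α x` is odd and
superadditive on `[0, ∞)`, the resonance function `d` never has the strict sign of
`ξ₁ ξ₂ (ξ₁ + ξ₂)`, i.e. of `t`; hence `|d - t| = |d| + |t|`, which lies between `|t|` and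
`(1 + C₁) |t|`. Finally `|t| ≈ δ` by the frequency localization and the velocity separation.
-/

noncomputable def signedPow (α x : ℝ) : ℝ := |x| ^ α * x

section signedPow

variable {α : ℝ}

lemma signedPow_neg (x : ℝ) : signedPow α (-x) = -signedPow α x := by
  simp [signedPow]

lemma signedPow_add_le (hα : 0 ≤ α) {a b : ℝ} (ha : 0 ≤ a) (hb : 0 ≤ b) :
    signedPow α a + signedPow α b ≤ signedPow α (a + b) := by
  simp only [signedPow, abs_of_nonneg ha, abs_of_nonneg hb, abs_of_nonneg (add_nonneg ha hb)]
  calc a ^ α * a + b ^ α * b ≤ (a + b) ^ α * a + (a + b) ^ α * b := by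
        gcongr <;> linarith
    _ = (a + b) ^ α * (a + b) := by ring

lemma signedPow_add_sub_mul_nonpos (hα : 0 ≤ α) (x y : ℝ) :
    (signedPow α x + signedPow α y - signedPow α (x + y)) * (x * y * (x + y)) ≤ 0 := by
  wlog hxy : 0 ≤ x + y generalizing x y
  · have := this (-x) (-y) (by linarith)
    rw [← neg_add, signedPow_neg, signedPow_neg, signedPow_neg] at this
    linarith
  wlog hyx : y ≤ x generalizing x y
  · have := this y x (by linarith) (by linarith)
    rwa [add_comm y x, add_comm (signedPow α y), mul_comm y x] at this
  rcases le_total 0 y with hy | hy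
  · have hx : 0 ≤ x := by linarith
    exact mul_nonpos_of_nonpos_of_nonneg (by linarith [signedPow_add_le hα hx hy])
      (by positivity)
  · have h := signedPow_add_le hα hxy (neg_nonneg.mpr hy)
    rw [add_neg_cancel_right, signedPow_neg] at h
    exact mul_nonpos_of_nonneg_of_nonpos (by linarith)
      (mul_nonpos_of_nonpos_of_nonneg (mul_nonpos_of_nonneg_of_nonpos (by linarith) hy) hxy)

end signedPow

lemma abs_sub_eq_abs_add_abs_of_mul_nonpos {a b : ℝ} (h : a * b ≤ 0) :
    |a - b| = |a| + |b| := by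
  rcases mul_nonpos_iff.mp h with ⟨ha, hb⟩ | ⟨ha, hb⟩
  · rw [abs_of_nonneg (by linarith), abs_of_nonneg ha, abs_of_nonpos hb]; ring
  · rw [abs_of_nonpos (by linarith), abs_of_nonpos ha, abs_of_nonneg hb]; ring

section normals

variable {α ξ₁ ξ₂ η₁ η₂ : ℝ}

lemma dispPart_mul_transPart_nonpos (hα : 0 ≤ α) :
    dispPart α ξ₁ ξ₂ * transPart ξ₁ ξ₂ η₁ η₂ ≤ 0 := by
  have hres := signedPow_add_sub_mul_nonpos hα ξ₁ ξ₂
  have hquot : (signedPow α ξ₁ + signedPow α ξ₂ - signedPow α (ξ₁ + ξ₂)) /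
      (ξ₁ * ξ₂ * (ξ₁ + ξ₂)) ≤ 0 :=
    div_nonpos_iff.mpr (mul_nonpos_iff.mp hres)
  calc dispPart α ξ₁ ξ₂ * transPart ξ₁ ξ₂ η₁ η₂
      = (α + 1) * (η₁ * ξ₂ - η₂ * ξ₁) ^ 2 *
          ((signedPow α ξ₁ + signedPow α ξ₂ - signedPow α (ξ₁ + ξ₂)) /
            (ξ₁ * ξ₂ * (ξ₁ + ξ₂))) := by
        simp only [dispPart, transPart, signedPow]; ring
    _ ≤ 0 := mul_nonpos_of_nonneg_of_nonpos (by positivity) hquot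

lemma transPart_eq (h₁ : ξ₁ ≠ 0) (h₂ : ξ₂ ≠ 0) :
    transPart ξ₁ ξ₂ η₁ η₂ = ξ₁ * ξ₂ * (η₁ / ξ₁ - η₂ / ξ₂) ^ 2 / (ξ₁ + ξ₂) := by
  unfold transPart
  field_simp

lemma detB_eq (h₁ : ξ₁ ≠ 0) (h₂ : ξ₂ ≠ 0) (h₁₂ : ξ₁ + ξ₂ ≠ 0) :
    detB α ξ₁ ξ₂ η₁ η₂ =
      -2 * (η₁ / ξ₁ - η₂ / ξ₂) * (dispPart α ξ₁ ξ₂ - transPart ξ₁ ξ₂ η₁ η₂) / (ξ₁ + ξ₂) := by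
  rw [detB, dispPart, transPart, Matrix.det_fin_three]
  simp only [Fin.isValue, Matrix.of_apply, Matrix.cons_val', Matrix.cons_val_zero,
    Matrix.cons_val_fin_one, Matrix.cons_val_one, Matrix.cons_val]
  field_simp
  ring

lemma abs_detB_eq (hα : 0 ≤ α) (h₁ : ξ₁ ≠ 0) (h₂ : ξ₂ ≠ 0) (h₁₂ : ξ₁ + ξ₂ ≠ 0) :
    |detB α ξ₁ ξ₂ η₁ η₂| = 2 * |η₁ / ξ₁ - η₂ / ξ₂| *
      (|dispPart α ξ₁ ξ₂| + |transPart ξ₁ ξ₂ η₁ η₂|) / |ξ₁ + ξ₂| := by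
  rw [detB_eq h₁ h₂ h₁₂, abs_div, abs_mul, abs_mul,
    abs_sub_eq_abs_add_abs_of_mul_nonpos (dispPart_mul_transPart_nonpos hα)]
  norm_num

end normals

/-- under the rescaled frequency localization, group velocity separation,
and the resonant balance between dispersive and transverse parts, the determinant of
normals is comparable to `δ = N_min/N_max`. -/
theorem statement18 (α c₁ C₁ : ℝ) (hα : 0 < α) (hc₁ : 0 < c₁) (hC₁ : 0 < C₁) :
    ∃ c C : ℝ, 0 < c ∧ 0 < C ∧
      ∀ δ ξ₁ ξ₂ η₁ η₂ : ℝ, 0 < δ → δ ≤ 1 →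
        1 / 8 ≤ |ξ₁| → |ξ₁| ≤ 8 →
        1 / 8 ≤ |ξ₁ + ξ₂| → |ξ₁ + ξ₂| ≤ 8 →
        δ / 8 ≤ |ξ₂| → |ξ₂| ≤ 8 * δ →
        c₁ ≤ |η₁ / ξ₁ - η₂ / ξ₂| → |η₁ / ξ₁ - η₂ / ξ₂| ≤ C₁ →
        c₁ * |transPart ξ₁ ξ₂ η₁ η₂| ≤ |dispPart α ξ₁ ξ₂| →
        |dispPart α ξ₁ ξ₂| ≤ C₁ * |transPart ξ₁ ξ₂ η₁ η₂| →
        c * δ ≤ |detB α ξ₁ ξ₂ η₁ η₂| ∧ |detB α ξ₁ ξ₂ η₁ η₂| ≤ C * δ := by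
  refine ⟨c₁ ^ 3 / 2048, 8192 * C₁ ^ 3 * (1 + C₁), by positivity, by positivity, ?_⟩
  intro δ ξ₁ ξ₂ η₁ η₂ hδ _ hξ₁ hξ₁' hs hs' hξ₂ hξ₂' hw hw' _ hdisp
  have h₁ : ξ₁ ≠ 0 := abs_pos.mp (by linarith)
  have h₂ : ξ₂ ≠ 0 := abs_pos.mp (by linarith)
  have h₁₂ : ξ₁ + ξ₂ ≠ 0 := abs_pos.mp (by linarith)
  have htrans : |transPart ξ₁ ξ₂ η₁ η₂| =
      |ξ₁| * |ξ₂| * |η₁ / ξ₁ - η₂ / ξ₂| ^ 2 / |ξ₁ + ξ₂| := by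
    rw [transPart_eq h₁ h₂, abs_div, abs_mul, abs_mul, abs_pow]
  rw [abs_detB_eq hα.le h₁ h₂ h₁₂]
  constructor
  · calc c₁ ^ 3 / 2048 * δ = 2 * c₁ * (1 / 8 * (δ / 8) * c₁ ^ 2 / 8) / 8 := by ring
      _ ≤ 2 * |η₁ / ξ₁ - η₂ / ξ₂| * |transPart ξ₁ ξ₂ η₁ η₂| / |ξ₁ + ξ₂| := by
        rw [htrans]; gcongr
      _ ≤ _ := by gcongr; exact le_add_of_nonneg_left (abs_nonneg _)
  · calc _ ≤ 2 * |η₁ / ξ₁ - η₂ / ξ₂| * ((1 + C₁) * |transPart ξ₁ ξ₂ η₁ η₂|) / |ξ₁ + ξ₂| := by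
          gcongr; linarith
      _ ≤ 2 * C₁ * ((1 + C₁) * (8 * (8 * δ) * C₁ ^ 2 / (1 / 8))) / (1 / 8) := by
        rw [htrans]; gcongr
      _ = 8192 * C₁ ^ 3 * (1 + C₁) * δ := by ring
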